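/- arXiv:2505.04304 — 2 statements merged into one kernel-verified Lean document; each statement's English description precedes it below -/
import Mathlib

section
/- For n ≥ 1, define s_j^- = I^{⊗(n-j)} ⊗ σ01 ⊗ σ10^{⊗(j-1)} and s_j^+ = (s_j^-)† for 1 ≤ j ≤ n. Then Σ_{j=1}^{n} Σ_{j'=j+1}^{n} ‖[(s_j^- + s_j^+), (s_{j'}^- + s_{j'}^+)]‖ = n − 1, where ‖·‖ is the operator norm and [·,·] the commutator. -/
open Matrix Complex
open scoped Matrix.Norms.L2Operator Kronecker

noncomputable section

/-- Kronecker product realized on `Fin (a*b)`, first factor most significant. -/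
def kron {a b : ℕ} (A : Matrix (Fin a) (Fin a) ℂ) (B : Matrix (Fin b) (Fin b) ℂ) :
    Matrix (Fin (a * b)) (Fin (a * b)) ℂ :=
  Matrix.reindex finProdFinEquiv finProdFinEquiv (Matrix.kroneckerMap (· * ·) A B)

def castM {a b : ℕ} (h : a = b) (A : Matrix (Fin a) (Fin a) ℂ) : Matrix (Fin b) (Fin b) ℂ :=
  Matrix.reindex (finCongr h) (finCongr h) A

def tpow (A : Matrix (Fin 2) (Fin 2) ℂ) : (k : ℕ) → Matrix (Fin (2 ^ k)) (Fin (2 ^ k)) ℂ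
  | 0 => 1
  | k + 1 => castM (pow_succ' 2 k).symm (kron A (tpow A k))

/-- `σ01 = |0⟩⟨1|`. -/
def sig01 : Matrix (Fin 2) (Fin 2) ℂ := Matrix.single 0 1 1

/-- `σ10 = |1⟩⟨0|`. -/
def sig10 : Matrix (Fin 2) (Fin 2) ℂ := Matrix.single 1 0 1

lemma sterm_size (n : ℕ) (j : Fin n) : 2 ^ (n - (j.1 + 1)) * (2 * 2 ^ j.1) = 2 ^ n := by
  rw [← pow_succ', ← pow_add]
  congr 1
  have hj := j.2
  omega

/-- `s_j^- = I^{⊗(n-j)} ⊗ σ01 ⊗ σ10^{⊗(j-1)}` on `n` qubits (paper index `j.1 + 1`). -/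
def sTerm (n : ℕ) (j : Fin n) : Matrix (Fin (2 ^ n)) (Fin (2 ^ n)) ℂ :=
  castM (sterm_size n j) (kron (tpow 1 (n - (j.1 + 1))) (kron sig01 (tpow sig10 j.1)))

/-!
Write `a = s_1^- + s_1^+`, the Pauli `X` on the last qubit, and `b_j = s_j^- + s_j^+`. For
`2 ≤ j < j'` the operators `b_j` and `b_{j'}` are supported on disjoint sets of basis states, so
both products vanish. For `b = b_{j'}` with `j' ≥ 2` one has `a² = 1`, `b³ = b` (since `b = s + s†`
with `s² = 0` and `s s† s = s`, read off factorwise from the tensor product) and `b a b = 0`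
(flipping the last bit moves the support of `b` off itself). These identities make
`(ab - ba)†(ab - ba) = a b² a + b²` a nonzero projection, so the commutator has norm `1` by the
C*-identity. Hence exactly the `n - 1` pairs `(1, j')` contribute, each with `1`.
-/

section CStarRing

variable {E : Type*} [NonUnitalNormedRing E] [StarRing E] [CStarRing E]

theorem IsStarProjection.norm_eq_one {p : E} (hp : IsStarProjection p) (h0 : p ≠ 0) :
    ‖p‖ = 1 := by
  have h : ‖p‖ * (‖p‖ - 1) = 0 := by
    simp [mul_sub, ← CStarRing.norm_star_mul_self, hp.isSelfAdjoint.star_eq,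
      hp.isIdempotentElem.eq]
  rcases mul_eq_zero.1 h with h | h
  · exact absurd (norm_eq_zero.1 h) h0
  · linarith

theorem norm_eq_one_of_isStarProjection_star_mul_self {c : E}
    (hc : IsStarProjection (star c * c)) (h0 : star c * c ≠ 0) : ‖c‖ = 1 := by
  have h := hc.norm_eq_one h0
  rw [CStarRing.norm_star_mul_self, mul_self_eq_one_iff] at h
  exact h.resolve_right (by linarith [norm_nonneg c])

end CStarRing

section StarRing

variable {R : Type*} [Ring R] [StarRing R]

theorem add_star_mul_add_star {s : R} (hs : s * s = 0) :
    (s + star s) * (s + star s) = s * star s + star s * s := by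
  have hs' : star s * star s = 0 := by rw [← star_mul, hs, star_zero]
  calc _ = s * s + s * star s + star s * s + star s * star s := by noncomm_ring
    _ = _ := by rw [hs, hs', zero_add, add_zero]

theorem add_star_mul_add_star_mul_add_star {s : R} (hs : s * s = 0) (hss : s * star s * s = s) :
    (s + star s) * (s + star s) * (s + star s) = s + star s := by
  have hs' : star s * star s = 0 := by rw [← star_mul, hs, star_zero]
  have hss' : star s * s * star s = star s := by
    simpa only [star_mul, star_star, mul_assoc] using congrArg star hss
  calc _ = s * s * (s + star s) + s * star s * s + s * (star s * star s) + star s * (s * s)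
        + star s * s * star s + star s * star s * (s + star s) := by noncomm_ring
    _ = s + star s := by rw [hs, hs', hss, hss']; noncomm_ring

theorem add_star_ne_zero {s : R} (hs : s * s = 0) (hss : s * star s * s = s) (h0 : s ≠ 0) :
    s + star s ≠ 0 := by
  intro h
  apply h0
  calc s = s * star s * s := hss.symm
    _ = s * (s + star s) * s - s * s * s := by noncomm_ring
    _ = 0 := by rw [h, hs]; noncomm_ring

variable {a b : R}

theorem star_commutator_mul_commutator (ha : IsSelfAdjoint a) (hb : IsSelfAdjoint b)
    (haa : a * a = 1) (hbab : b * a * b = 0) :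
    star (a * b - b * a) * (a * b - b * a) = a * (b * b) * a + b * b := by
  rw [star_sub, star_mul, star_mul, ha.star_eq, hb.star_eq]
  calc _ = b * (a * a) * b - b * a * b * a - a * (b * a * b) + a * (b * b) * a := by noncomm_ring
    _ = _ := by rw [haa, hbab]; noncomm_ring

theorem isStarProjection_star_commutator_mul_commutator (ha : IsSelfAdjoint a)
    (hb : IsSelfAdjoint b) (haa : a * a = 1) (hbbb : b * b * b = b) (hbab : b * a * b = 0) :
    IsStarProjection (star (a * b - b * a) * (a * b - b * a)) := by
  refine ⟨?_, .star_mul_self _⟩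
  rw [IsIdempotentElem, star_commutator_mul_commutator ha hb haa hbab]
  calc _ = a * (b * b * (a * a) * b * b) * a + a * b * (b * a * b) * b + b * (b * a * b) * b * a
        + b * b * b * b := by noncomm_ring
    _ = a * (b * b * b * b) * a + b * b * b * b := by rw [haa, hbab]; noncomm_ring
    _ = _ := by rw [hbbb]

theorem star_commutator_mul_commutator_ne_zero (ha : IsSelfAdjoint a) (hb : IsSelfAdjoint b)
    (haa : a * a = 1) (hbbb : b * b * b = b) (hbab : b * a * b = 0) (hb0 : b ≠ 0) :
    star (a * b - b * a) * (a * b - b * a) ≠ 0 := by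
  rw [star_commutator_mul_commutator ha hb haa hbab]
  intro h
  have hbb : b * b = 0 := by
    calc b * b = b * b * b * b := by rw [hbbb]
      _ = b * b * (a * (b * b) * a + b * b) - b * (b * a * b) * b * a := by noncomm_ring
      _ = 0 := by rw [h, hbab]; noncomm_ring
  exact hb0 (by rw [← hbbb, hbb, zero_mul])

end StarRing

theorem norm_commutator_eq_one {E : Type*} [NormedRing E] [StarRing E] [CStarRing E] {a b : E}
    (ha : IsSelfAdjoint a) (hb : IsSelfAdjoint b) (haa : a * a = 1) (hbbb : b * b * b = b)
    (hbab : b * a * b = 0) (hb0 : b ≠ 0) : ‖a * b - b * a‖ = 1 :=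
  norm_eq_one_of_isStarProjection_star_mul_self
    (isStarProjection_star_commutator_mul_commutator ha hb haa hbbb hbab)
    (star_commutator_mul_commutator_ne_zero ha hb haa hbbb hbab hb0)

theorem Matrix.exists_ne_zero_of_mul_apply_ne_zero {l m o α : Type*} [Fintype m]
    [NonUnitalNonAssocSemiring α] {A : Matrix l m α} {B : Matrix m o α} {i : l} {k : o}
    (h : (A * B) i k ≠ 0) : ∃ z, A i z ≠ 0 ∧ B z k ≠ 0 := by
  obtain ⟨z, -, hz⟩ := Finset.exists_ne_zero_of_sum_ne_zero h
  exact ⟨z, left_ne_zero_of_mul hz, right_ne_zero_of_mul hz⟩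

section Kronecker

variable {a b : ℕ}

theorem kron_apply (A : Matrix (Fin a) (Fin a) ℂ) (B : Matrix (Fin b) (Fin b) ℂ)
    (x y : Fin (a * b)) : kron A B x y = A x.divNat y.divNat * B x.modNat y.modNat := rfl

theorem kron_mul_kron (A C : Matrix (Fin a) (Fin a) ℂ) (B D : Matrix (Fin b) (Fin b) ℂ) :
    kron A B * kron C D = kron (A * C) (B * D) := by
  simp only [kron, reindex_apply, submatrix_mul_equiv, mul_kronecker_mul]

theorem conjTranspose_kron (A : Matrix (Fin a) (Fin a) ℂ) (B : Matrix (Fin b) (Fin b) ℂ) :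
    (kron A B)ᴴ = kron Aᴴ Bᴴ := by
  simp only [kron, conjTranspose_reindex, conjTranspose_kronecker]

theorem add_kron (A A' : Matrix (Fin a) (Fin a) ℂ) (B : Matrix (Fin b) (Fin b) ℂ) :
    kron (A + A') B = kron A B + kron A' B := by
  simp only [kron, add_kronecker]; rfl

theorem kron_add (A : Matrix (Fin a) (Fin a) ℂ) (B B' : Matrix (Fin b) (Fin b) ℂ) :
    kron A (B + B') = kron A B + kron A B' := by
  simp only [kron, kronecker_add]; rfl

theorem zero_kron (B : Matrix (Fin b) (Fin b) ℂ) :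
    kron (0 : Matrix (Fin a) (Fin a) ℂ) B = 0 := by
  simp [kron]

theorem kron_zero (A : Matrix (Fin a) (Fin a) ℂ) :
    kron A (0 : Matrix (Fin b) (Fin b) ℂ) = 0 := by
  simp [kron]

theorem kron_one_one : kron (1 : Matrix (Fin a) (Fin a) ℂ) (1 : Matrix (Fin b) (Fin b) ℂ) = 1 := by
  simp [kron]

theorem castM_apply (h : a = b) (A : Matrix (Fin a) (Fin a) ℂ) (x y : Fin b) :
    castM h A x y = A (Fin.cast h.symm x) (Fin.cast h.symm y) := rfl

theorem castM_eq_reindexAlgEquiv (h : a = b) :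
    castM h = reindexAlgEquiv ℂ ℂ (finCongr h) := rfl

theorem conjTranspose_castM (h : a = b) (A : Matrix (Fin a) (Fin a) ℂ) :
    (castM h A)ᴴ = castM h Aᴴ := conjTranspose_reindex _ _ _

end Kronecker

theorem tpow_mul_tpow (A B : Matrix (Fin 2) (Fin 2) ℂ) (k : ℕ) :
    tpow A k * tpow B k = tpow (A * B) k := by
  induction k with
  | zero => exact mul_one 1
  | succ k ih => simp only [tpow, castM_eq_reindexAlgEquiv, ← map_mul, kron_mul_kron, ih]

theorem conjTranspose_tpow (A : Matrix (Fin 2) (Fin 2) ℂ) (k : ℕ) :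
    (tpow A k)ᴴ = tpow Aᴴ k := by
  induction k with
  | zero => exact conjTranspose_one
  | succ k ih => rw [tpow, tpow, conjTranspose_castM, conjTranspose_kron, ih]

theorem tpow_one (k : ℕ) : tpow 1 k = 1 := by
  induction k with
  | zero => rfl
  | succ k ih => rw [tpow, ih, kron_one_one, castM_eq_reindexAlgEquiv, map_one]

theorem tpow_sig10_apply (k : ℕ) (x y : Fin (2 ^ k)) :
    tpow sig10 k x y = if x.1 = 2 ^ k - 1 ∧ y.1 = 0 then 1 else 0 := by
  induction k with
  | zero => simp [tpow, Matrix.one_apply, Fin.ext_iff]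
  | succ k ih =>
    rw [tpow, castM_apply, kron_apply, ih, sig10, single_apply, ite_zero_mul_ite_zero, one_mul]
    simp only [Fin.ext_iff, Fin.coe_divNat, Fin.coe_modNat, Fin.val_cast, Fin.val_one, Fin.val_zero]
    refine if_congr ?_ rfl rfl
    have hk : 0 < 2 ^ k := Nat.two_pow_pos k
    rw [and_and_and_comm, eq_comm (a := 1), eq_comm (a := 0), Nat.div_mod_unique hk,
      Nat.div_mod_unique hk]
    have := pow_succ 2 k
    omega

theorem sig01_mul_sig01 : sig01 * sig01 = 0 := by
  simp [sig01]

theorem conjTranspose_sig01 : sig01ᴴ = sig10 := by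
  simp [sig01, sig10]

theorem conjTranspose_sig10 : sig10ᴴ = sig01 := by
  rw [← conjTranspose_sig01, conjTranspose_conjTranspose]

theorem sig01_mul_sig10_mul_sig01 : sig01 * sig10 * sig01 = sig01 := by
  simp [sig01, sig10]

theorem sig10_mul_sig01_mul_sig10 : sig10 * sig01 * sig10 = sig10 := by
  simp [sig01, sig10]

theorem sig01_mul_sig10_add_sig10_mul_sig01 : sig01 * sig10 + sig10 * sig01 = 1 := by
  ext i j
  fin_cases i <;> fin_cases j <;> simp [sig01, sig10, one_apply]

def siteOp (n : ℕ) (j : Fin n) (A B : Matrix (Fin 2) (Fin 2) ℂ) :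
    Matrix (Fin (2 ^ n)) (Fin (2 ^ n)) ℂ :=
  castM (sterm_size n j) (kron (tpow 1 (n - (j.1 + 1))) (kron A (tpow B j.1)))

section siteOp

variable {n : ℕ} (j : Fin n)

theorem siteOp_mul_siteOp (A B C D : Matrix (Fin 2) (Fin 2) ℂ) :
    siteOp n j A B * siteOp n j C D = siteOp n j (A * C) (B * D) := by
  simp only [siteOp, castM_eq_reindexAlgEquiv, ← map_mul, kron_mul_kron, tpow_mul_tpow, mul_one]

theorem conjTranspose_siteOp (A B : Matrix (Fin 2) (Fin 2) ℂ) :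
    (siteOp n j A B)ᴴ = siteOp n j Aᴴ Bᴴ := by
  simp only [siteOp, conjTranspose_castM, conjTranspose_kron, conjTranspose_tpow, conjTranspose_one]

theorem siteOp_zero_left (B : Matrix (Fin 2) (Fin 2) ℂ) : siteOp n j 0 B = 0 := by
  simp only [siteOp, zero_kron, kron_zero, castM_eq_reindexAlgEquiv, map_zero]

theorem siteOp_add_left (A A' B : Matrix (Fin 2) (Fin 2) ℂ) :
    siteOp n j (A + A') B = siteOp n j A B + siteOp n j A' B := by
  simp only [siteOp, add_kron, kron_add, castM_eq_reindexAlgEquiv, map_add]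

theorem siteOp_one_one : siteOp n j 1 1 = 1 := by
  simp only [siteOp, tpow_one, kron_one_one, castM_eq_reindexAlgEquiv, map_one]

end siteOp

theorem sTerm_eq_siteOp (n : ℕ) (j : Fin n) : sTerm n j = siteOp n j sig01 sig10 := rfl

theorem sTerm_mul_self (n : ℕ) (j : Fin n) : sTerm n j * sTerm n j = 0 := by
  rw [sTerm_eq_siteOp, siteOp_mul_siteOp, sig01_mul_sig01, siteOp_zero_left]

theorem sTerm_mul_conjTranspose_mul (n : ℕ) (j : Fin n) :
    sTerm n j * (sTerm n j)ᴴ * sTerm n j = sTerm n j := by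
  rw [sTerm_eq_siteOp, conjTranspose_siteOp, conjTranspose_sig01, conjTranspose_sig10,
    siteOp_mul_siteOp, siteOp_mul_siteOp, sig01_mul_sig10_mul_sig01, sig10_mul_sig01_mul_sig10]

theorem sTerm_zero_mul_conjTranspose_add (n : ℕ) (h : 0 < n) :
    sTerm n ⟨0, h⟩ * (sTerm n ⟨0, h⟩)ᴴ + (sTerm n ⟨0, h⟩)ᴴ * sTerm n ⟨0, h⟩ = 1 := by
  rw [sTerm_eq_siteOp, conjTranspose_siteOp, conjTranspose_sig01, conjTranspose_sig10,
    siteOp_mul_siteOp, siteOp_mul_siteOp]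
  -- at `j = 0` the factor `tpow B 0` is `1` whatever `B` is
  change siteOp n ⟨0, h⟩ (sig01 * sig10) 1 + siteOp n ⟨0, h⟩ (sig10 * sig01) 1 = 1
  rw [← siteOp_add_left, sig01_mul_sig10_add_sig10_mul_sig01, siteOp_one_one]

theorem sTerm_apply (n : ℕ) (j : Fin n) (x y : Fin (2 ^ n)) :
    sTerm n j x y = if x.1 % 2 ^ (j.1 + 1) = 2 ^ j.1 - 1 ∧ y.1 = x.1 + 1 then 1 else 0 := by
  rw [sTerm, castM_apply, kron_apply, kron_apply, tpow_one, one_apply, sig01, single_apply,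
    tpow_sig10_apply, ite_zero_mul_ite_zero, one_mul, ite_zero_mul_ite_zero, one_mul]
  simp only [Fin.ext_iff, Fin.coe_divNat, Fin.coe_modNat, Fin.val_cast, Fin.val_one, Fin.val_zero]
  refine if_congr ?_ rfl rfl
  rw [← pow_succ']
  set K := 2 ^ j.1
  set M := 2 ^ (j.1 + 1)
  have hK : 0 < K := Nat.two_pow_pos j.1
  have hM : M = 2 * K := pow_succ' 2 j.1
  have hx := Nat.div_add_mod x.1 M
  have hy := Nat.div_add_mod y.1 M
  constructor
  · rintro ⟨hq, ⟨hx1, hy1⟩, hx2, hy2⟩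
    have hxr := ((Nat.div_mod_unique hK).1 ⟨hx1.symm, hx2⟩).1
    have hyr := ((Nat.div_mod_unique hK).1 ⟨hy1.symm, hy2⟩).1
    rw [hq] at hx
    omega
  · rintro ⟨hxr, hyx⟩
    obtain ⟨hq, hyr⟩ := (Nat.div_mod_unique (by omega)).2
      (show K + M * (x.1 / M) = y.1 ∧ K < M by omega)
    rw [hq, hyr, hxr]
    exact ⟨rfl, ⟨(Nat.div_eq_of_lt (by omega)).symm, (Nat.div_self hK).symm⟩,
      Nat.mod_eq_of_lt (by omega), Nat.mod_self K⟩

theorem sTerm_ne_zero (n : ℕ) (j : Fin n) : sTerm n j ≠ 0 := by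
  have hK : 2 ^ j.1 < 2 ^ n := Nat.pow_lt_pow_right one_lt_two j.2
  have hx : 2 ^ j.1 - 1 < 2 ^ n := (Nat.sub_le _ _).trans_lt hK
  have hval : sTerm n j ⟨_, hx⟩ ⟨_, hK⟩ = 1 := by
    have := Nat.two_pow_pos j.1
    have hmod : (2 ^ j.1 - 1) % 2 ^ (j.1 + 1) = 2 ^ j.1 - 1 :=
      Nat.mod_eq_of_lt (by rw [pow_succ]; omega)
    rw [sTerm_apply, if_pos ⟨hmod, show 2 ^ j.1 = 2 ^ j.1 - 1 + 1 by omega⟩]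
  intro h
  rw [h] at hval
  exact zero_ne_one hval

/-- The basis states moved by `s_j^±`: their lowest `j + 1` bits are `01…1` or `10…0`. -/
def carrySet (j : ℕ) : Set ℕ := {x | x % 2 ^ (j + 1) = 2 ^ j - 1 ∨ x % 2 ^ (j + 1) = 2 ^ j}

theorem add_one_mod_two_pow_succ {x j : ℕ} (h : x % 2 ^ (j + 1) = 2 ^ j - 1) :
    (x + 1) % 2 ^ (j + 1) = 2 ^ j := by
  have hK := Nat.two_pow_pos j
  have hM : 2 ^ (j + 1) = 2 * 2 ^ j := pow_succ' 2 j
  rw [Nat.add_mod, h, Nat.one_mod_eq_one.2 (by omega), Nat.sub_add_cancel hK,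
    Nat.mod_eq_of_lt (by omega)]

theorem carrySet_disjoint {j j' : ℕ} (hj : 1 ≤ j) (hjj' : j < j') :
    Disjoint (carrySet j) (carrySet j') := by
  rw [Set.disjoint_left]
  intro x hx hx'
  have hK : 2 ≤ 2 ^ j := Nat.le_self_pow (by omega) 2
  have hM : 2 ^ (j + 1) = 2 * 2 ^ j := pow_succ' 2 j
  obtain ⟨t, ht⟩ : 2 ^ (j + 1) ∣ 2 ^ j' := pow_dvd_pow 2 hjj'
  have ht0 : 2 ^ (j + 1) ≤ 2 ^ (j + 1) * t := by
    refine Nat.le_mul_of_pos_right _ (Nat.pos_of_ne_zero ?_)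
    rintro rfl
    simp at ht
  have hdvd : 2 ^ (j + 1) ∣ 2 ^ (j' + 1) := pow_dvd_pow 2 (by omega)
  rw [carrySet, Set.mem_ofPred_eq, ← Nat.mod_mod_of_dvd x hdvd] at hx
  rcases hx' with h | h <;> rw [h, ht] at hx
  · have hr : (2 ^ (j + 1) * t - 1) % 2 ^ (j + 1) = 2 ^ (j + 1) - 1 :=
      ((Nat.div_mod_unique (d := t - 1) (by omega)).2
        ⟨by rw [Nat.mul_sub_one]; omega, by omega⟩).2
    omega
  · rw [Nat.mul_mod_right] at hx
    omega

theorem add_one_notMem_carrySet {j x : ℕ} (hj : 1 ≤ j) (hx2 : x % 2 = 0)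
    (hx : x ∈ carrySet j) : x + 1 ∉ carrySet j := by
  have hK : 2 ≤ 2 ^ j := Nat.le_self_pow (by omega) 2
  have hM : 2 ^ (j + 1) = 2 * 2 ^ j := pow_succ' 2 j
  have hpar : x % 2 ^ (j + 1) % 2 = 0 := by
    rwa [Nat.mod_mod_of_dvd x (by rw [hM]; exact dvd_mul_right 2 _)]
  have hKeven : 2 ^ j % 2 = 0 := Nat.two_pow_mod_two_eq_zero.2 (by omega)
  have hxK : x % 2 ^ (j + 1) = 2 ^ j := hx.resolve_left (by omega)
  have : (x + 1) % 2 ^ (j + 1) = 2 ^ j + 1 := by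
    rw [Nat.add_mod, hxK, Nat.one_mod_eq_one.2 (by omega), Nat.mod_eq_of_lt (by omega)]
  rw [carrySet, Set.mem_ofPred_eq, this]
  omega

def sHerm (n : ℕ) (j : Fin n) : Matrix (Fin (2 ^ n)) (Fin (2 ^ n)) ℂ :=
  sTerm n j + (sTerm n j)ᴴ

section sHerm

variable {n : ℕ}

theorem sHerm_apply_ne_zero {j : Fin n} {x y : Fin (2 ^ n)} (h : sHerm n j x y ≠ 0) :
    (x.1 % 2 ^ (j.1 + 1) = 2 ^ j.1 - 1 ∧ y.1 = x.1 + 1) ∨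
      (y.1 % 2 ^ (j.1 + 1) = 2 ^ j.1 - 1 ∧ x.1 = y.1 + 1) := by
  rw [sHerm, Matrix.add_apply, conjTranspose_apply, sTerm_apply, sTerm_apply] at h
  by_contra hc
  rw [not_or] at hc
  rw [if_neg hc.1, if_neg hc.2, star_zero, add_zero] at h
  exact h rfl

theorem mem_carrySet_of_sHerm_apply_ne_zero {j : Fin n} {x y : Fin (2 ^ n)}
    (h : sHerm n j x y ≠ 0) : x.1 ∈ carrySet j ∧ y.1 ∈ carrySet j := by
  rcases sHerm_apply_ne_zero h with ⟨hx, hy⟩ | ⟨hy, hx⟩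
  · exact ⟨Or.inl hx, Or.inr (hy ▸ add_one_mod_two_pow_succ hx)⟩
  · exact ⟨Or.inr (hx ▸ add_one_mod_two_pow_succ hy), Or.inl hy⟩

theorem sHerm_mul_sHerm_of_disjoint {j j' : Fin n} (h : Disjoint (carrySet j) (carrySet j')) :
    sHerm n j * sHerm n j' = 0 := by
  ext x y
  by_contra hxy
  obtain ⟨z, hxz, hzy⟩ := Matrix.exists_ne_zero_of_mul_apply_ne_zero hxy
  exact Set.disjoint_left.1 h (mem_carrySet_of_sHerm_apply_ne_zero hxz).2
    (mem_carrySet_of_sHerm_apply_ne_zero hzy).1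

theorem sHerm_mul_sHerm_zero_mul_sHerm (h : 0 < n) {j : Fin n} (hj : 1 ≤ j.1) :
    sHerm n j * sHerm n ⟨0, h⟩ * sHerm n j = 0 := by
  ext x y
  by_contra hxy
  obtain ⟨w, hxw, hwy⟩ := Matrix.exists_ne_zero_of_mul_apply_ne_zero hxy
  obtain ⟨z, hxz, hzw⟩ := Matrix.exists_ne_zero_of_mul_apply_ne_zero hxw
  have hz := (mem_carrySet_of_sHerm_apply_ne_zero hxz).2
  have hw := (mem_carrySet_of_sHerm_apply_ne_zero hwy).1
  rcases sHerm_apply_ne_zero hzw with ⟨hz2, hwz⟩ | ⟨hw2, hzw'⟩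
  · exact add_one_notMem_carrySet hj (by simpa using hz2) hz (hwz ▸ hw)
  · exact add_one_notMem_carrySet hj (by simpa using hw2) hw (hzw' ▸ hz)

theorem sHerm_zero_mul_self (h : 0 < n) : sHerm n ⟨0, h⟩ * sHerm n ⟨0, h⟩ = 1 :=
  (add_star_mul_add_star (sTerm_mul_self n _)).trans (sTerm_zero_mul_conjTranspose_add n h)

theorem sHerm_mul_self_mul_self (j : Fin n) : sHerm n j * sHerm n j * sHerm n j = sHerm n j :=
  add_star_mul_add_star_mul_add_star (sTerm_mul_self n j) (sTerm_mul_conjTranspose_mul n j)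

theorem sHerm_ne_zero (j : Fin n) : sHerm n j ≠ 0 :=
  add_star_ne_zero (sTerm_mul_self n j) (sTerm_mul_conjTranspose_mul n j) (sTerm_ne_zero n j)

theorem norm_commutator_sHerm_zero_eq_one (h : 0 < n) {j : Fin n} (hj : 1 ≤ j.1) :
    ‖sHerm n ⟨0, h⟩ * sHerm n j - sHerm n j * sHerm n ⟨0, h⟩‖ = 1 :=
  norm_commutator_eq_one (.add_star_self _) (.add_star_self _) (sHerm_zero_mul_self h)
    (sHerm_mul_self_mul_self j) (sHerm_mul_sHerm_zero_mul_sHerm h hj) (sHerm_ne_zero j)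

theorem norm_commutator_sHerm_eq_zero {j j' : Fin n} (hj : 1 ≤ j.1) (hjj' : j < j') :
    ‖sHerm n j * sHerm n j' - sHerm n j' * sHerm n j‖ = 0 := by
  have hd := carrySet_disjoint hj hjj'
  rw [sHerm_mul_sHerm_of_disjoint hd, sHerm_mul_sHerm_of_disjoint hd.symm, sub_zero, norm_zero]

end sHerm

theorem sum_ite_lt_and_val_eq_zero (m : ℕ) :
    ∑ j : Fin (m + 1), ∑ j' : Fin (m + 1), (if j < j' ∧ j.1 = 0 then (1 : ℝ) else 0) = m := by
  rw [Fin.sum_univ_succ, Fin.sum_univ_succ]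
  simp [Fin.succ_pos]

theorem norm_commutator_sHerm_eq_ite {n : ℕ} (h : 0 < n) (j j' : Fin n) :
    (if j < j' then ‖sHerm n j * sHerm n j' - sHerm n j' * sHerm n j‖ else 0) =
      if j < j' ∧ j.1 = 0 then (1 : ℝ) else 0 := by
  by_cases hjj' : j < j'
  · rw [if_pos hjj']
    by_cases hj : j.1 = 0
    · obtain rfl : j = ⟨0, h⟩ := Fin.ext hj
      rw [if_pos ⟨hjj', rfl⟩, norm_commutator_sHerm_zero_eq_one h hjj']
    · rw [if_neg (fun h' => hj h'.2), norm_commutator_sHerm_eq_zero (by omega) hjj']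
  · rw [if_neg hjj', if_neg (fun h' => hjj' h'.1)]

/-- Sum of spectral norms of commutators of the shift summands equals `n - 1`. -/
theorem stmt_3 (n : ℕ) (hn : 1 ≤ n) :
    ∑ j : Fin n, ∑ j' : Fin n,
      (if j < j' then
        ‖(sTerm n j + (sTerm n j)ᴴ) * (sTerm n j' + (sTerm n j')ᴴ) -
          (sTerm n j' + (sTerm n j')ᴴ) * (sTerm n j + (sTerm n j)ᴴ)‖
      else 0) = (n : ℝ) - 1 := by
  obtain ⟨m, rfl⟩ : ∃ m, n = m + 1 := ⟨n - 1, by omega⟩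
  calc _ = ∑ j : Fin (m + 1), ∑ j' : Fin (m + 1), if j < j' ∧ j.1 = 0 then (1 : ℝ) else 0 :=
        Finset.sum_congr rfl fun j _ => Finset.sum_congr rfl fun j' _ =>
          norm_commutator_sHerm_eq_ite m.succ_pos j j'
    _ = _ := by rw [sum_ite_lt_and_val_eq_zero]; push_cast; ring
end
end

section
/- Let H1, H2 be Hermitian N×N matrices. Then for any τ ≥ 0, ‖exp(iτ(H1+H2)) − exp(iτ H1) exp(iτ H2)‖ ≤ (τ²/2)·‖[H1, H2]‖ in the operator norm. -/
/-!
With `E_x(s) = exp (s • x)`, the defect `D(s) = E_{-(a+b)}(s) E_a(s) E_b(s)` starts at `D(0) = 1`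
and has derivative `E_{-(a+b)}(s) [E_a(s), b] E_b(s)`. Conjugating `b` by `E_a(u)` has derivative
`E_a(u) [a, b] E_a(-u)`, so when all the one-parameter groups are contractions,
`‖[E_a(s), b]‖ ≤ s ‖[a, b]‖`, and integrating once more gives `‖D(τ) - 1‖ ≤ τ² / 2 ‖[a, b]‖`.
Since `E_{a+b}(τ) - E_a(τ) E_b(τ) = -E_{a+b}(τ) (D(τ) - 1)`, the bound follows. For `a = i H₁`,
`b = i H₂` with `H₁, H₂` self-adjoint in a C⋆-algebra, all these exponentials are unitary.
-/

open NormedSpace Set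

section BanachAlgebra

variable {𝔸 : Type*} [NormedRing 𝔸]

lemma norm_mul_mul_le_of_norm_le_one {x y z : 𝔸} (hx : ‖x‖ ≤ 1) (hz : ‖z‖ ≤ 1) :
    ‖x * y * z‖ ≤ ‖y‖ :=
  calc ‖x * y * z‖ ≤ ‖x‖ * ‖y‖ * ‖z‖ := norm_mul₃_le
    _ ≤ 1 * ‖y‖ * 1 := by gcongr
    _ = ‖y‖ := by ring

variable [NormedAlgebra ℝ 𝔸]

lemma exp_smul_mul_self (x : 𝔸) (s : ℝ) : exp (s • x) * x = x * exp (s • x) :=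
  ((Commute.refl x).smul_left s).exp_left.eq

lemma norm_exp_smul_neg_le_one {a : 𝔸} (ha : ∀ t : ℝ, ‖exp (t • a)‖ ≤ 1) (t : ℝ) :
    ‖exp (t • -a)‖ ≤ 1 := by
  simpa only [smul_neg, neg_smul] using ha (-t)

variable [CompleteSpace 𝔸]

lemma exp_smul_neg_mul_exp_smul (x : 𝔸) (s : ℝ) : exp (s • -x) * exp (s • x) = 1 := by
  let +nondep : NormedAlgebra ℚ 𝔸 := .restrictScalars ℚ ℝ 𝔸
  rw [smul_neg, ← exp_add_of_commute (Commute.refl _).neg_left, neg_add_cancel, exp_zero]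

lemma exp_smul_mul_exp_smul_neg (x : 𝔸) (s : ℝ) : exp (s • x) * exp (s • -x) = 1 := by
  let +nondep : NormedAlgebra ℚ 𝔸 := .restrictScalars ℚ ℝ 𝔸
  rw [smul_neg, ← exp_add_of_commute (Commute.refl _).neg_right, add_neg_cancel, exp_zero]

lemma hasDerivAt_exp_smul_mul_mul_exp_smul_neg (a b : 𝔸) (s : ℝ) :
    HasDerivAt (fun u : ℝ => exp (u • a) * b * exp (u • -a))
      (exp (s • a) * (a * b - b * a) * exp (s • -a)) s := by
  refine ((hasDerivAt_exp_smul_const a s).mul_const b |>.mul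
    (hasDerivAt_exp_smul_const (-a) s)).congr_deriv ?_
  have h := exp_smul_mul_self (-a) s
  simp only [mul_neg, neg_mul] at h
  simp only [mul_sub, sub_mul, mul_neg, mul_assoc, h]
  abel

lemma norm_exp_smul_mul_sub_mul_exp_smul_le {a : 𝔸} (ha : ∀ t : ℝ, ‖exp (t • a)‖ ≤ 1) (b : 𝔸)
    {s : ℝ} (hs : 0 ≤ s) : ‖exp (s • a) * b - b * exp (s • a)‖ ≤ s * ‖a * b - b * a‖ := by
  have hconj : ‖exp (s • a) * b * exp (s • -a) - b‖ ≤ ‖a * b - b * a‖ * (s - 0) := by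
    simpa using norm_image_sub_le_of_norm_deriv_le_segment'
      (fun u _ => (hasDerivAt_exp_smul_mul_mul_exp_smul_neg a b u).hasDerivWithinAt)
      (fun u _ => norm_mul_mul_le_of_norm_le_one (ha u) (norm_exp_smul_neg_le_one ha u))
      s (right_mem_Icc.mpr hs)
  have hcomm : exp (s • a) * b - b * exp (s • a) =
      (exp (s • a) * b * exp (s • -a) - b) * exp (s • a) := by
    rw [sub_mul, mul_assoc _ (exp (s • -a)), exp_smul_neg_mul_exp_smul, mul_one]
  calc ‖exp (s • a) * b - b * exp (s • a)‖
      ≤ ‖exp (s • a) * b * exp (s • -a) - b‖ * ‖exp (s • a)‖ := hcomm ▸ norm_mul_le _ _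
    _ ≤ ‖a * b - b * a‖ * (s - 0) * 1 := by gcongr; exact ha s
    _ = s * ‖a * b - b * a‖ := by ring

noncomputable def trotterDefect (a b : 𝔸) (s : ℝ) : 𝔸 :=
  exp (s • -(a + b)) * (exp (s • a) * exp (s • b))

lemma hasDerivAt_trotterDefect (a b : 𝔸) (s : ℝ) :
    HasDerivAt (trotterDefect a b)
      (exp (s • -(a + b)) * ((exp (s • a) * b - b * exp (s • a)) * exp (s • b))) s := by
  refine ((hasDerivAt_exp_smul_const (-(a + b)) s).mul
    ((hasDerivAt_exp_smul_const a s).mul (hasDerivAt_exp_smul_const b s))).congr_deriv ?_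
  have ha := exp_smul_mul_self a s
  have hb := exp_smul_mul_self b s
  simp only [Pi.mul_apply, mul_add, add_mul, mul_sub, sub_mul, mul_neg, neg_mul, neg_add, mul_assoc]
  rw [← mul_assoc (exp (s • a)) a, ha, ← mul_assoc _ b, hb]
  simp only [mul_assoc]
  abel

lemma norm_trotterDefect_sub_one_le {a b : 𝔸} (ha : ∀ t : ℝ, ‖exp (t • a)‖ ≤ 1)
    (hb : ∀ t : ℝ, ‖exp (t • b)‖ ≤ 1) (hab : ∀ t : ℝ, ‖exp (t • (a + b))‖ ≤ 1) {τ : ℝ}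
    (hτ : 0 ≤ τ) : ‖trotterDefect a b τ - 1‖ ≤ τ ^ 2 / 2 * ‖a * b - b * a‖ := by
  have hD (s : ℝ) := (hasDerivAt_trotterDefect a b s).sub_const 1
  refine image_norm_le_of_norm_deriv_right_le_deriv_boundary
    (B := fun s => s ^ 2 / 2 * ‖a * b - b * a‖) (B' := fun s => s * ‖a * b - b * a‖)
    (fun s _ => (hD s).continuousAt.continuousWithinAt) (fun s _ => (hD s).hasDerivWithinAt)
    (by simp [trotterDefect]) (fun s => ?_) (fun s hs => ?_) (right_mem_Icc.mpr hτ)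
  · simpa using ((hasDerivAt_pow 2 s).div_const 2).mul_const ‖a * b - b * a‖
  · rw [← mul_assoc]
    exact (norm_mul_mul_le_of_norm_le_one (norm_exp_smul_neg_le_one hab s) (hb s)).trans
      (norm_exp_smul_mul_sub_mul_exp_smul_le ha b hs.1)

theorem norm_exp_smul_add_sub_exp_smul_mul_exp_smul_le {a b : 𝔸}
    (ha : ∀ t : ℝ, ‖exp (t • a)‖ ≤ 1) (hb : ∀ t : ℝ, ‖exp (t • b)‖ ≤ 1)
    (hab : ∀ t : ℝ, ‖exp (t • (a + b))‖ ≤ 1) {τ : ℝ} (hτ : 0 ≤ τ) :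
    ‖exp (τ • (a + b)) - exp (τ • a) * exp (τ • b)‖ ≤ τ ^ 2 / 2 * ‖a * b - b * a‖ := by
  have hdiff : exp (τ • (a + b)) - exp (τ • a) * exp (τ • b) =
      -(exp (τ • (a + b)) * (trotterDefect a b τ - 1)) := by
    simp only [trotterDefect, mul_sub, ← mul_assoc, exp_smul_mul_exp_smul_neg, one_mul, mul_one,
      neg_sub]
  calc ‖exp (τ • (a + b)) - exp (τ • a) * exp (τ • b)‖
      ≤ ‖exp (τ • (a + b))‖ * ‖trotterDefect a b τ - 1‖ := by
        rw [hdiff, norm_neg]; exact norm_mul_le _ _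
    _ ≤ 1 * (τ ^ 2 / 2 * ‖a * b - b * a‖) := by
        gcongr
        exacts [hab τ, norm_trotterDefect_sub_one_le ha hb hab hτ]
    _ = τ ^ 2 / 2 * ‖a * b - b * a‖ := one_mul _

end BanachAlgebra

section CStarAlgebra

variable {A : Type*} [CStarAlgebra A]

lemma norm_exp_smul_le_one_of_mem_skewAdjoint {a : A} (ha : a ∈ skewAdjoint A) (t : ℝ) :
    ‖exp (t • a)‖ ≤ 1 := by
  let +nondep : NormedAlgebra ℚ A := .restrictScalars ℚ ℂ A
  have hu : exp (t • a) ∈ unitary A :=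
    exp_mem_unitary_of_mem_skewAdjoint (skewAdjoint.smul_mem t ha)
  rcases subsingleton_or_nontrivial A with _ | _
  · simp [Subsingleton.elim (exp (t • a)) 0]
  · exact (CStarRing.norm_of_mem_unitary hu).le

theorem IsSelfAdjoint.norm_exp_I_smul_add_sub_exp_I_smul_mul_exp_I_smul_le {H₁ H₂ : A}
    (h₁ : IsSelfAdjoint H₁) (h₂ : IsSelfAdjoint H₂) {τ : ℝ} (hτ : 0 ≤ τ) :
    ‖NormedSpace.exp ((Complex.I * τ) • (H₁ + H₂)) -
        NormedSpace.exp ((Complex.I * τ) • H₁) * NormedSpace.exp ((Complex.I * τ) • H₂)‖ ≤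
      τ ^ 2 / 2 * ‖H₁ * H₂ - H₂ * H₁‖ := by
  have hsmul (x : A) : (Complex.I * τ) • x = τ • (Complex.I • x) := by
    rw [mul_comm, mul_smul, Complex.coe_smul]
  have hskew {x : A} (hx : IsSelfAdjoint x) (t : ℝ) :
      ‖NormedSpace.exp (t • (Complex.I • x))‖ ≤ 1 :=
    norm_exp_smul_le_one_of_mem_skewAdjoint (hx.smul_mem_skewAdjoint Complex.conj_I) t
  have hcomm : Complex.I • H₁ * (Complex.I • H₂) - Complex.I • H₂ * (Complex.I • H₁) =
      -(H₁ * H₂ - H₂ * H₁) := by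
    simp only [smul_mul_smul_comm, Complex.I_mul_I, neg_one_smul, neg_sub_neg, neg_sub]
  rw [hsmul, hsmul, hsmul, ← norm_neg (H₁ * H₂ - H₂ * H₁), ← hcomm, smul_add]
  exact norm_exp_smul_add_sub_exp_smul_mul_exp_smul_le (hskew h₁) (hskew h₂)
    (smul_add Complex.I H₁ H₂ ▸ hskew (h₁.add h₂)) hτ

end CStarAlgebra

open Matrix
open scoped Matrix.Norms.L2Operator

/-- First-order Lie–Trotter error bound with commutator scaling. -/
theorem stmt_5 (N : ℕ) (H1 H2 : Matrix (Fin N) (Fin N) ℂ)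
    (h1 : H1.IsHermitian) (h2 : H2.IsHermitian) (τ : ℝ) (hτ : 0 ≤ τ) :
    ‖NormedSpace.exp ((Complex.I * τ) • (H1 + H2)) -
        NormedSpace.exp ((Complex.I * τ) • H1) * NormedSpace.exp ((Complex.I * τ) • H2)‖ ≤
      τ ^ 2 / 2 * ‖H1 * H2 - H2 * H1‖ :=
  IsSelfAdjoint.norm_exp_I_smul_add_sub_exp_I_smul_mul_exp_I_smul_le h1.isSelfAdjoint
    h2.isSelfAdjoint hτ
end
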